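/- arXiv:2508.06680 — 2 statements merged into one kernel-verified Lean document; each statement's English description precedes it below -/
import Mathlib

section
/- Let p > 3 be a prime and F a field of characteristic p equipped with a discrete valuation v : F → ℤ ∪ {∞}. Let a₄, a₆ ∈ F with v(a₄) ≥ 0 and v(a₆) ≥ 0, let ι ≥ 1 be an integer, and let x, y ∈ F satisfy y² = x³ + a₄·x + a₆ with v(x) = −2ι and v(y) = −3ι. With A, L as in the Hasse invariant decomposition of (X³ + a₄X + a₆)^((p−1)/2) evaluated at a₄, a₆, x, and ℘_A(z) = z^p − A·z, one has v( ℘_A((a₄·x + 3a₆)/(3xy)) ) ≥ 3ι and v( y·L(x)/x^p ) ≥ ι. -/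
/-!
The coefficients of `(X³ + a₄X + a₆)^((p-1)/2)` have nonnegative valuation, hence so do `A` and
the coefficients of `L`. Since `deg L ≤ p - 2` and `v x < 0`, this gives
`v (L x) ≥ (p - 2) v x`, so `v (y L(x) / x^p) ≥ -3ι - 2(p - 2)ι + 2pι = ι`.
For the first bound, `3` lies in the prime field, so `v 3 = 0` and
`v ((a₄x + 3a₆) / (3xy)) ≥ -2ι + 5ι = 3ι`; as `A` is integral, `z ↦ z^p - A z` cannot lower a
nonnegative lower bound on the valuation.
-/

open Polynomial

namespace Polynomial

variable {R : Type*} [Ring R] [Nontrivial R]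

theorem coeff_modByMonic_X_pow (q : R[X]) (n i : ℕ) :
    (q %ₘ X ^ n).coeff i = if i < n then q.coeff i else 0 := by
  split_ifs with hi
  · have h := congrArg (coeff · i) (modByMonic_add_div q (X ^ n))
    simpa [coeff_X_pow_mul', not_le.2 hi] using h
  · refine coeff_eq_zero_of_degree_lt ?_
    calc (q %ₘ X ^ n).degree < (X ^ n : R[X]).degree := degree_modByMonic_lt q (monic_X_pow n)
      _ ≤ i := by rw [degree_X_pow]; exact_mod_cast not_lt.1 hi

theorem coeff_modByMonic_X_pow_succ_sub (q : R[X]) (n i : ℕ) :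
    (q %ₘ X ^ (n + 1) - C (q.coeff n) * X ^ n).coeff i = if i < n then q.coeff i else 0 := by
  rw [coeff_sub, coeff_C_mul_X_pow, coeff_modByMonic_X_pow]
  split_ifs <;> first | omega | subst_vars; simp

theorem natDegree_modByMonic_X_pow_succ_sub_le (q : R[X]) (n : ℕ) :
    (q %ₘ X ^ (n + 1) - C (q.coeff n) * X ^ n).natDegree ≤ n - 1 := by
  rw [natDegree_le_iff_coeff_eq_zero]
  intro i hi
  rw [coeff_modByMonic_X_pow_succ_sub, if_neg (by omega)]

end Polynomial

namespace AddValuation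

variable {R Γ₀ : Type*} [LinearOrderedAddCommMonoidWithTop Γ₀]

section Ring

variable [Ring R] (v : AddValuation R Γ₀)

def integer : Subring R where
  carrier := {r | 0 ≤ v r}
  zero_mem' := by simp
  one_mem' := by simp
  add_mem' ha hb := v.map_le_add ha hb
  mul_mem' {a b} ha hb := by simpa using add_nonneg ha hb
  neg_mem' ha := by simpa using ha

theorem mem_integer_iff {r : R} : r ∈ v.integer ↔ 0 ≤ v r := Iff.rfl

theorem map_natCast_nonneg (n : ℕ) : 0 ≤ v n := natCast_mem v.integer n

theorem mem_lifts_integer_iff {q : R[X]} :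
    q ∈ lifts v.integer.subtype ↔ ∀ i, 0 ≤ v (q.coeff i) := by
  simp [lifts_iff_coeff_lifts, mem_integer_iff]

theorem C_mem_lifts_integer {a : R} (ha : 0 ≤ v a) : C a ∈ lifts v.integer.subtype :=
  C_mem_lifts v.integer.subtype ⟨a, ha⟩

variable {v}

theorem le_map_pow_sub_mul {a u : R} {g : Γ₀} (ha : 0 ≤ v a) (hg : 0 ≤ g) (hu : g ≤ v u)
    {n : ℕ} (hn : n ≠ 0) : g ≤ v (u ^ n - a * u) := by
  have hu0 : 0 ≤ v u := hg.trans hu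
  refine le_trans (le_min ?_ ?_) (v.map_sub _ _)
  · rw [v.map_pow]; exact hu.trans (le_self_nsmul hu0 hn)
  · rw [v.map_mul]; exact hu.trans (le_add_of_nonneg_left ha)

theorem nsmul_le_map_eval {q : R[X]} (hq : ∀ i, 0 ≤ v (q.coeff i)) {m : ℕ} (hm : q.natDegree ≤ m)
    {x : R} (hx : v x ≤ 0) : m • v x ≤ v (q.eval x) := by
  rw [eval_eq_sum_range]
  refine v.map_le_sum fun i hi => ?_
  rw [v.map_mul, v.map_pow]
  calc m • v x ≤ i • v x :=
        nsmul_le_nsmul_left_of_nonpos hx ((Nat.lt_succ_iff.1 (Finset.mem_range.1 hi)).trans hm)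
    _ ≤ v (q.coeff i) + i • v x := le_add_of_nonneg_left (hq i)

end Ring

theorem map_natCast_eq_zero {F : Type*} [Field F] (v : AddValuation F Γ₀) (p : ℕ) [Fact p.Prime]
    [CharP F p] {n : ℕ} (hn : (n : F) ≠ 0) : v n = 0 := by
  have hnp : (n : ZMod p) ≠ 0 := by
    rwa [← map_natCast (ZMod.castHom (dvd_refl p) F), _root_.map_ne_zero] at hn
  have hpow : (n : F) ^ (p - 1) = 1 := by
    rw [← map_natCast (ZMod.castHom (dvd_refl p) F), ← _root_.map_pow,
      ZMod.pow_card_sub_one_eq_one hnp, _root_.map_one]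
  refine le_antisymm ?_ (v.map_natCast_nonneg n)
  calc v n ≤ (p - 1) • v n :=
        le_self_nsmul (v.map_natCast_nonneg n) (by have := (Fact.out : p.Prime).two_le; omega)
    _ = 0 := by rw [← v.map_pow, hpow, v.map_one]

end AddValuation

theorem map_one_eq_zero_of_map_mul {M : Type*} [MulZeroOneClass M] [Nontrivial M]
    {v : M → WithTop ℤ} (hv0 : ∀ a, v a = ⊤ ↔ a = 0) (hvmul : ∀ a b, v (a * b) = v a + v b) :
    v 1 = 0 := by
  have h := hvmul 1 1
  rw [one_mul] at h
  lift v 1 to ℤ using fun h1 => one_ne_zero ((hv0 1).1 h1) with n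
  norm_cast at h ⊢
  omega

section WeierstrassPoint

variable {F : Type*} [Field F] {w : AddValuation F (WithTop ℤ)} {ι : ℤ} {x y : F}

theorem le_map_div_three_mul_mul (hx : w x = ((-2 * ι : ℤ) : WithTop ℤ))
    (hy : w y = ((-3 * ι : ℤ) : WithTop ℤ)) {a₄ a₆ : F} (ha₄ : 0 ≤ w a₄) (ha₆ : 0 ≤ w a₆)
    (h3 : w 3 = 0) (hι : 0 ≤ ι) :
    ((3 * ι : ℤ) : WithTop ℤ) ≤ w ((a₄ * x + 3 * a₆) / (3 * x * y)) := by
  have hnum : w x ≤ w (a₄ * x + 3 * a₆) := by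
    refine w.map_le_add (by rw [w.map_mul]; exact le_add_of_nonneg_left ha₄) ?_
    rw [w.map_mul, h3, zero_add, hx]
    exact le_trans (by exact_mod_cast (by omega : -2 * ι ≤ 0)) ha₆
  rw [div_eq_mul_inv, w.map_mul, w.map_inv, w.map_mul, w.map_mul, h3, zero_add, hy]
  refine le_trans ?_ (add_le_add hnum le_rfl)
  rw [hx]
  norm_cast
  omega

theorem le_map_mul_eval_div_pow (hx : w x = ((-2 * ι : ℤ) : WithTop ℤ))
    (hy : w y = ((-3 * ι : ℤ) : WithTop ℤ)) {q : F[X]} (hq : ∀ i, 0 ≤ w (q.coeff i)) {n : ℕ}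
    (hdeg : q.natDegree ≤ n - 2) (hn : 2 ≤ n) (hι : 0 ≤ ι) :
    ((ι : ℤ) : WithTop ℤ) ≤ w (y * q.eval x / x ^ n) := by
  have hxneg : w x ≤ 0 := by rw [hx]; exact_mod_cast (by omega : -2 * ι ≤ 0)
  have hqx := AddValuation.nsmul_le_map_eval hq hdeg hxneg
  rw [div_eq_mul_inv, w.map_mul, w.map_mul, w.map_inv, w.map_pow, hy]
  refine le_trans ?_ (add_le_add (add_le_add le_rfl hqx) le_rfl)
  rw [hx, ← WithTop.coe_nsmul, ← WithTop.coe_nsmul]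
  norm_cast
  rw [nsmul_eq_mul, nsmul_eq_mul, Nat.cast_sub hn]
  push_cast
  linarith

end WeierstrassPoint

theorem stmt_5_general (p : ℕ) (hp : p.Prime) (hp3 : 3 < p)
    (F : Type*) [Field F] [CharP F p]
    (v : F → WithTop ℤ)
    (hv0 : ∀ a, v a = ⊤ ↔ a = 0)
    (hvmul : ∀ a b, v (a * b) = v a + v b)
    (hvadd : ∀ a b, min (v a) (v b) ≤ v (a + b))
    (a₄ a₆ : F) (ha₄ : 0 ≤ v a₄) (ha₆ : 0 ≤ v a₆)
    (ι : ℤ) (hι : 1 ≤ ι)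
    (x y : F)
    (hvx : v x = ((-2 * ι : ℤ) : WithTop ℤ)) (hvy : v y = ((-3 * ι : ℤ) : WithTop ℤ)) :
    let P : Polynomial F :=
      (Polynomial.X ^ 3 + Polynomial.C a₄ * Polynomial.X + Polynomial.C a₆) ^ ((p - 1) / 2)
    let A : F := P.coeff (p - 1)
    let L : Polynomial F :=
      Polynomial.modByMonic P (Polynomial.X ^ p) - Polynomial.C A * Polynomial.X ^ (p - 1)
    let wA : F → F := fun z => z ^ p - A * z
    ((3 * ι : ℤ) : WithTop ℤ) ≤ v (wA ((a₄ * x + 3 * a₆) / (3 * x * y))) ∧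
      ((ι : ℤ) : WithTop ℤ) ≤ v (y * L.eval x / x ^ p) := by
  intro P A L wA
  have : Fact p.Prime := ⟨hp⟩
  let w : AddValuation F (WithTop ℤ) :=
    .of v ((hv0 0).2 rfl) (map_one_eq_zero_of_map_mul hv0 hvmul) hvadd hvmul
  have hP : ∀ i, 0 ≤ w (P.coeff i) := w.mem_lifts_integer_iff.1 <|
    pow_mem (add_mem (add_mem (pow_mem (X_mem_lifts _) 3)
      (mul_mem (w.C_mem_lifts_integer ha₄) (X_mem_lifts _))) (w.C_mem_lifts_integer ha₆)) _
  have hLdef : L = P %ₘ X ^ (p - 1 + 1) - C A * X ^ (p - 1) := by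
    rw [Nat.sub_add_cancel hp.one_le]
  have hL : ∀ i, 0 ≤ w (L.coeff i) := fun i => by
    rw [hLdef, coeff_modByMonic_X_pow_succ_sub]
    split_ifs
    exacts [hP i, w.map_zero ▸ le_top]
  have hLdeg : L.natDegree ≤ p - 2 :=
    hLdef ▸ (natDegree_modByMonic_X_pow_succ_sub_le P (p - 1)).trans (by omega)
  have hw3 : w 3 = 0 := by
    have h3 : ((3 : ℕ) : F) ≠ 0 := fun h =>
      absurd (Nat.le_of_dvd three_pos ((CharP.cast_eq_zero_iff F p 3).1 h)) (by omega)
    exact_mod_cast w.map_natCast_eq_zero p h3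
  constructor
  · have hu := le_map_div_three_mul_mul (w := w) hvx hvy ha₄ ha₆ hw3 (by omega)
    exact AddValuation.le_map_pow_sub_mul (hP (p - 1)) (by exact_mod_cast (by omega : 0 ≤ 3 * ι))
      hu hp.ne_zero
  · exact le_map_mul_eval_div_pow (w := w) hvx hvy hL hLdeg (by omega) (by omega)

/-- Let `p > 3` be a prime and `F` a field of characteristic `p` equipped with
a discrete valuation `v : F → ℤ ∪ {∞}`.  Let `a₄, a₆ ∈ F` with `v(a₄) ≥ 0` and `v(a₆) ≥ 0`,
let `ι ≥ 1` be an integer, and let `x, y ∈ F` satisfy `y² = x³ + a₄·x + a₆` with `v(x) = −2ι`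
and `v(y) = −3ι`.  With `A`, `L` as in the Hasse invariant decomposition of
`(X³ + a₄X + a₆)^((p−1)/2)` evaluated at `a₄, a₆, x`, and `℘_A(z) = z^p − A·z`, one has
`v( ℘_A((a₄·x + 3a₆)/(3xy)) ) ≥ 3ι` and `v( y·L(x)/x^p ) ≥ ι`. -/
theorem stmt_5 (p : ℕ) (hp : p.Prime) (hp3 : 3 < p)
    (F : Type*) [Field F] [CharP F p]
    (v : F → WithTop ℤ)
    (hv0 : ∀ a, v a = ⊤ ↔ a = 0)
    (hvmul : ∀ a b, v (a * b) = v a + v b)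
    (hvadd : ∀ a b, min (v a) (v b) ≤ v (a + b))
    (a₄ a₆ : F) (ha₄ : 0 ≤ v a₄) (ha₆ : 0 ≤ v a₆)
    (ι : ℤ) (hι : 1 ≤ ι)
    (x y : F) (hcurve : y ^ 2 = x ^ 3 + a₄ * x + a₆)
    (hvx : v x = ((-2 * ι : ℤ) : WithTop ℤ)) (hvy : v y = ((-3 * ι : ℤ) : WithTop ℤ)) :
    let P : Polynomial F :=
      (Polynomial.X ^ 3 + Polynomial.C a₄ * Polynomial.X + Polynomial.C a₆) ^ ((p - 1) / 2)
    let A : F := P.coeff (p - 1)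
    let L : Polynomial F :=
      Polynomial.modByMonic P (Polynomial.X ^ p) - Polynomial.C A * Polynomial.X ^ (p - 1)
    let wA : F → F := fun z => z ^ p - A * z
    ((3 * ι : ℤ) : WithTop ℤ) ≤ v (wA ((a₄ * x + 3 * a₆) / (3 * x * y))) ∧
      ((ι : ℤ) : WithTop ℤ) ≤ v (y * L.eval x / x ^ p) :=
  stmt_5_general p hp hp3 F v hv0 hvmul hvadd a₄ a₆ ha₄ ha₆ ι hι x y hvx hvy
end

section
/- Let p be a prime, and let K be a complete discretely valued field of characteristic p with normalized valuation v and perfect residue field. Let u, A, c ∈ K with v(u) = 0, v(A) = p − 1, and v(c) = ι where 1 ≤ ι ≤ p − 1, and let z be a root of u·Z^p + A·Z − c in an algebraic closure of K. Then the degree-p totally ramified extension K(z)/K has a unique ramification break, equal to p − ι; equivalently, the different ideal of the extension of valuation rings O_{K(z)}/O_K has valuation exponent (p − 1)(p − ι + 1). -/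
/-!
The Newton polygon of `u Z^p + A Z - c` gives `w z = ι / p` with `p ∤ ι`. The values
`n + j ι / p` (`n ∈ ℤ`, `0 ≤ j < p`) are pairwise distinct, so a `K`-combination of
`1, z, …, z^(p-1)` has the value of its dominant term; hence `[K(z) : K] = p`, and a uniformizer
`π = P(z)` has a dominant term of positive degree. Two roots of `u Z^p + A Z - c` differ by a root
of the additive polynomial `u Z^p + A Z`, i.e. by an element of value `1`. For such a conjugate `y`
of `z`, each term `a_j (z^j - y^j)` of `P(z) - P(y)` has value exactly `1 - ι / p` more than
`a_j z^j`, so the dominant term persists and `w (π - σ π) = (p - ι + 1) / p` for each of the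
`p - 1` conjugates `σ π ≠ π`. Finally `g'(π) = ∏ (π - σ π)`.
-/

open Polynomial IntermediateField

theorem map_one_eq_zero_of_map_mul_s13 {R : Type*} [MulOneClass R] {f : R → WithTop ℚ}
    (h1 : f 1 ≠ ⊤) (hmul : ∀ a b, f (a * b) = f a + f b) : f 1 = 0 :=
  WithTop.add_left_cancel h1 (by rw [add_zero, ← hmul, one_mul])

namespace AddValuation

section LinearOrderedAddCommMonoidWithTop

variable {R Γ₀ : Type*} [LinearOrderedAddCommMonoidWithTop Γ₀]

theorem map_natCast_nonneg_s13 [Ring R] (v : AddValuation R Γ₀) (n : ℕ) : 0 ≤ v n := by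
  induction n with
  | zero => simp
  | succ n ih =>
    push_cast
    exact le_trans (le_min ih v.map_one.ge) (v.map_add _ _)

theorem map_sum_eq_of_lt [Ring R] (v : AddValuation R Γ₀) {ι : Type*} [DecidableEq ι]
    {s : Finset ι} {f : ι → R} {j : ι} (hj : j ∈ s) (hf : ∀ i ∈ s \ {j}, v (f j) < v (f i)) :
    v (∑ i ∈ s, f i) = v (f j) :=
  Valuation.map_sum_eq_of_lt v hj hf

theorem map_multiset_prod_of_forall_eq [CommRing R] (v : AddValuation R Γ₀) {s : Multiset R}
    {g : Γ₀} (h : ∀ x ∈ s, v x = g) : v s.prod = s.card • g := by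
  induction s using Multiset.induction with
  | empty => simp
  | cons a s ih =>
    rw [Multiset.prod_cons, v.map_mul, h a (Multiset.mem_cons_self a s),
      ih fun x hx => h x (Multiset.mem_cons_of_mem hx), Multiset.card_cons, succ_nsmul']

theorem map_aeval_derivative_minpoly {K L : Type*} [Field K] [Field L] [Algebra K L]
    [IsAlgClosed L] (v : AddValuation L Γ₀) {π : L} (hsep : IsSeparable K π) {g : Γ₀}
    (h : ∀ r ∈ (minpoly K π).aroots L, r ≠ π → v (π - r) = g) :
    v (aeval π (derivative (minpoly K π))) = ((minpoly K π).natDegree - 1) • g := by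
  classical
  have hmonic := (minpoly.monic hsep.isIntegral).map (algebraMap K L)
  have hroot : π ∈ (minpoly K π).aroots L :=
    mem_aroots.2 ⟨minpoly.ne_zero hsep.isIntegral, minpoly.aeval K π⟩
  have hnodup : ((minpoly K π).aroots L).Nodup := nodup_roots (Separable.map hsep)
  rw [aeval_def, eval₂_eq_eval_map, ← derivative_map,
    (IsAlgClosed.splits _).eval_root_derivative hmonic hroot,
    v.map_multiset_prod_of_forall_eq (g := g), Multiset.card_map,
    Multiset.card_erase_of_mem hroot, ← (IsAlgClosed.splits _).natDegree_eq_card_roots,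
    natDegree_map, Nat.pred_eq_sub_one]
  intro x hx
  obtain ⟨r, hr, rfl⟩ := Multiset.mem_map.1 hx
  exact h r (Multiset.mem_of_mem_erase hr) (hnodup.mem_erase_iff.1 hr).1

end LinearOrderedAddCommMonoidWithTop

variable {L : Type*} [Field L] (W : AddValuation L (WithTop ℚ))

theorem map_pow_of_eq_coe {x : L} {q : ℚ} (hx : W x = q) (n : ℕ) :
    W (x ^ n) = ((n * q : ℚ) : WithTop ℚ) := by
  rw [W.map_pow, hx, ← WithTop.coe_nsmul, nsmul_eq_mul]

theorem map_natCast_of_ne_zero (p : ℕ) [hp : Fact p.Prime] [CharP L p] {m : ℕ}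
    (hm : (m : L) ≠ 0) : W m = 0 := by
  obtain ⟨q, hq⟩ := WithTop.ne_top_iff_exists.mp ((W.ne_top_iff).mpr hm)
  have hm' : (m : ZMod p) ≠ 0 := by
    rwa [Ne, ZMod.natCast_eq_zero_iff, ← CharP.cast_eq_zero_iff L p]
  have hunit : (m : L) ^ (p - 1) = 1 := by
    rw [← map_natCast (ZMod.castHom dvd_rfl L), ← _root_.map_pow,
      ZMod.pow_card_sub_one_eq_one hm', _root_.map_one]
  have h := W.map_pow_of_eq_coe hq.symm (p - 1)
  rw [hunit, W.map_one, ← WithTop.coe_zero, WithTop.coe_inj, zero_eq_mul] at h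
  have hp1 : ((p - 1 : ℕ) : ℚ) ≠ 0 := Nat.cast_ne_zero.2 (by have := hp.out.two_le; omega)
  rw [← hq, h.resolve_left hp1, WithTop.coe_zero]

theorem map_add_pow_sub_pow {z δ : L} {a b : ℚ} (hz : W z = a) (hδ : W δ = b)
    (hab : a < b) {j : ℕ} (hj : 1 ≤ j) (hjW : W j = 0) :
    W ((z + δ) ^ j - z ^ j) = (((j - 1) * a + b : ℚ) : WithTop ℚ) := by
  set F : ℕ → L := fun k => δ ^ (k + 1) * z ^ (j - (k + 1)) * (j.choose (k + 1) : L)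
  have hsum : (z + δ) ^ j - z ^ j = ∑ k ∈ Finset.range j, F k := by
    rw [add_comm z δ, add_pow, Finset.sum_range_succ']
    simp [F]
  have hF : ∀ k < j, W (F k) = (((j - 1) * a + b + k * (b - a) : ℚ) : WithTop ℚ)
      + W (j.choose (k + 1) : L) := by
    intro k hk
    simp only [F, map_mul, W.map_pow_of_eq_coe hz, W.map_pow_of_eq_coe hδ, ← WithTop.coe_add]
    congr 2
    push_cast [Nat.cast_sub (show k + 1 ≤ j by omega)]
    ring
  rw [hsum, W.map_sum_eq_of_lt (Finset.mem_range.2 hj), hF 0 hj, Nat.choose_one_right, hjW]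
  · simp
  intro k hk
  simp only [Finset.mem_sdiff, Finset.mem_range, Finset.mem_singleton] at hk
  rw [hF 0 hj, hF k hk.1, Nat.choose_one_right, hjW, add_zero]
  refine lt_add_of_lt_of_nonneg (WithTop.coe_lt_coe.2 ?_) (W.map_natCast_nonneg_s13 _)
  have hk0 : (0 : ℚ) < k := by exact_mod_cast Nat.pos_of_ne_zero hk.2
  have : 0 < k * (b - a) := mul_pos hk0 (sub_pos.2 hab)
  simp only [Nat.cast_zero, zero_mul, add_zero]
  linarith

end AddValuation

section

variable {L : Type*} [Field L] (W : AddValuation L (WithTop ℚ))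

section IntegralValues

variable {K : Type*} [Field K] [Algebra K L]
  (hK : ∀ a : K, a ≠ 0 → ∃ n : ℤ, W (algebraMap K L a) = (n : ℚ))
  {p : ℕ} {x : L} {ε : ℤ} (hx : W x = ((ε / p : ℚ) : WithTop ℚ))
include hK hx

theorem exists_map_smul_pow_eq {a : K} (ha : a ≠ 0) (j : ℕ) :
    ∃ n : ℤ, W (a • x ^ j) = ((n + j * (ε / p) : ℚ) : WithTop ℚ) := by
  obtain ⟨n, hn⟩ := hK a ha
  exact ⟨n, by rw [Algebra.smul_def, W.map_mul, hn, W.map_pow_of_eq_coe hx, ← WithTop.coe_add]⟩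

variable [hp : Fact p.Prime] (hε : ¬ (p : ℤ) ∣ ε)
include hε

theorem eq_of_map_smul_pow_eq {a b : K} (ha : a ≠ 0) (hb : b ≠ 0) {i j : ℕ} (hi : i < p)
    (hj : j < p) (h : W (a • x ^ i) = W (b • x ^ j)) : i = j := by
  obtain ⟨n, hn⟩ := exists_map_smul_pow_eq W hK hx ha i
  obtain ⟨m, hm⟩ := exists_map_smul_pow_eq W hK hx hb j
  rw [hn, hm, WithTop.coe_inj] at h
  have hp0 : (p : ℚ) ≠ 0 := Nat.cast_ne_zero.2 hp.out.ne_zero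
  have hdvd : (p : ℤ) ∣ (i - j : ℤ) * ε := ⟨m - n, by
    field_simp at h
    exact_mod_cast (by linarith : ((i : ℚ) - j) * ε = p * (m - n))⟩
  have hij := ((Int.prime_iff_natAbs_prime.2 (by simpa using hp.out)).dvd_or_dvd hdvd).resolve_right
    hε
  have := Int.eq_zero_of_abs_lt_dvd hij (by rw [abs_sub_lt_iff]; omega)
  omega

theorem exists_map_aeval_eq_map_smul_pow (P : K[X]) (hP0 : P ≠ 0) (hP : P.natDegree < p) :
    ∃ j₀ < p, P.coeff j₀ ≠ 0 ∧ W (aeval x P) = W (P.coeff j₀ • x ^ j₀) ∧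
      ∀ j < p, j ≠ j₀ → W (P.coeff j₀ • x ^ j₀) < W (P.coeff j • x ^ j) := by
  classical
  set s := (Finset.range p).filter fun j => P.coeff j ≠ 0
  have hs : s.Nonempty := ⟨P.natDegree, by simp [s, hP, hP0]⟩
  obtain ⟨j₀, hj₀s, hmin⟩ := s.exists_min_image (fun j => W (P.coeff j • x ^ j)) hs
  simp only [s, Finset.mem_filter, Finset.mem_range] at hj₀s hmin
  have hlt : ∀ j < p, j ≠ j₀ → W (P.coeff j₀ • x ^ j₀) < W (P.coeff j • x ^ j) := by
    intro j hj hne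
    by_cases hcj : P.coeff j = 0
    · obtain ⟨n, hn⟩ := exists_map_smul_pow_eq W hK hx hj₀s.2 j₀
      rw [hcj, zero_smul, W.map_zero, hn]
      exact WithTop.coe_lt_top _
    · exact lt_of_le_of_ne (hmin j ⟨hj, hcj⟩)
        fun h => hne (eq_of_map_smul_pow_eq W hK hx hε hj₀s.2 hcj hj₀s.1 hj h).symm
  refine ⟨j₀, hj₀s.1, hj₀s.2, ?_, hlt⟩
  rw [aeval_eq_sum_range' hP, W.map_sum_eq_of_lt (Finset.mem_range.2 hj₀s.1)]
  intro j hj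
  simp only [Finset.mem_sdiff, Finset.mem_range, Finset.mem_singleton] at hj
  exact hlt j hj.1 hj.2

theorem le_natDegree_minpoly (hint : IsIntegral K x) : p ≤ (minpoly K x).natDegree := by
  by_contra! hlt
  obtain ⟨j₀, -, hj₀, hval, -⟩ :=
    exists_map_aeval_eq_map_smul_pow W hK hx hε _ (minpoly.ne_zero hint) hlt
  obtain ⟨n, hn⟩ := exists_map_smul_pow_eq W hK hx hj₀ j₀
  rw [minpoly.aeval, W.map_zero, hn] at hval
  exact WithTop.top_ne_coe hval

end IntegralValues

section RootsOfAdditiveEquation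

variable {p : ℕ} [hp : Fact p.Prime] {u A c : L} (hu : W u = 0)
  (hA : W A = ((p - 1 : ℚ) : WithTop ℚ))
include hu hA

theorem map_eq_div_of_root {ι : ℚ} (hc : W c = ι) (hιp : ι < p) {z : L}
    (hz : u * z ^ p + A * z - c = 0) : W z = ((ι / p : ℚ) : WithTop ℚ) := by
  have hc' : u * z ^ p + A * z = c := sub_eq_zero.1 hz
  have hp1 : (1 : ℚ) < p := by exact_mod_cast hp.out.one_lt
  have hz0 : z ≠ 0 := by
    rintro rfl
    rw [zero_pow hp.out.ne_zero, mul_zero, mul_zero, add_zero, eq_comm, ← W.top_iff, hc] at hc'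
    exact WithTop.coe_ne_top hc'
  obtain ⟨q, hq⟩ := WithTop.ne_top_iff_exists.1 (W.ne_top_iff.2 hz0)
  have hzp : W (u * z ^ p) = ((p * q : ℚ) : WithTop ℚ) := by
    rw [W.map_mul, hu, W.map_pow_of_eq_coe hq.symm, zero_add]
  have hAz : W (A * z) = ((p - 1 + q : ℚ) : WithTop ℚ) := by
    rw [W.map_mul, hA, ← hq, ← WithTop.coe_add]
  rcases lt_or_ge q 1 with hq1 | hq1
  · have hlt : p * q < p - 1 + q := by nlinarith
    have hval := W.map_add_eq_of_lt_left (x := u * z ^ p) (y := A * z)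
      (by rwa [hzp, hAz, WithTop.coe_lt_coe])
    rw [hc', hc, hzp, WithTop.coe_inj] at hval
    rw [← hq, WithTop.coe_inj, hval]
    field_simp
  · have hmin := W.map_add (u * z ^ p) (A * z)
    rw [hc', hzp, hAz, hc, ← WithTop.coe_min, WithTop.coe_le_coe] at hmin
    have : (p : ℚ) ≤ min (p * q) (p - 1 + q) := le_min (by nlinarith) (by linarith)
    linarith

theorem eq_or_map_sub_eq_one_of_roots [CharP L p] {y z : L} (hy : u * y ^ p + A * y - c = 0)
    (hz : u * z ^ p + A * z - c = 0) : y = z ∨ W (y - z) = 1 := by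
  rcases eq_or_ne (y - z) 0 with h | hδ
  · exact .inl (sub_eq_zero.1 h)
  refine .inr ?_
  have hfac : (y - z) * (u * (y - z) ^ (p - 1) + A) = 0 := by
    have hpow : (y - z) * (y - z) ^ (p - 1) = (y - z) ^ p := by
      rw [← pow_succ', Nat.sub_add_cancel hp.out.one_le]
    linear_combination u * hpow + u * sub_pow_char y z + hy - hz
  have hneg : u * (y - z) ^ (p - 1) = -A :=
    eq_neg_of_add_eq_zero_left ((mul_eq_zero.1 hfac).resolve_left hδ)
  obtain ⟨q, hq⟩ := WithTop.ne_top_iff_exists.1 (W.ne_top_iff.2 hδ)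
  have h := congrArg W hneg
  rw [W.map_mul, hu, zero_add, W.map_pow_of_eq_coe hq.symm, W.map_neg, hA, WithTop.coe_inj,
    Nat.cast_sub hp.out.one_le, Nat.cast_one] at h
  have hp1 : (p : ℚ) - 1 ≠ 0 := sub_ne_zero.2 (by exact_mod_cast hp.out.one_lt.ne')
  rw [← hq, mul_eq_left₀ hp1 |>.1 h, WithTop.coe_one]

end RootsOfAdditiveEquation

theorem map_aeval_sub_aeval_of_map_sub_eq {K : Type*} [Field K] [Algebra K L]
    (hK : ∀ a : K, a ≠ 0 → ∃ n : ℤ, W (algebraMap K L a) = (n : ℚ))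
    {p : ℕ} [hp : Fact p.Prime] [CharP L p] {z y : L} {ι : ℤ}
    (hz : W z = ((ι / p : ℚ) : WithTop ℚ)) (hι : ¬ (p : ℤ) ∣ ι) {b : ℚ} (hy : W (y - z) = b)
    (hιb : ι / p < b) {P : K[X]} (hP : P.natDegree < p)
    (hπ : W (aeval z P) = ((1 / p : ℚ) : WithTop ℚ)) :
    W (aeval z P - aeval y P) = ((1 / p + (b - ι / p) : ℚ) : WithTop ℚ) := by
  have hP0 : P ≠ 0 := by
    rintro rfl
    rw [map_zero, W.map_zero] at hπ
    exact WithTop.top_ne_coe hπ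
  obtain ⟨j₀, hj₀p, hj₀, hval, hlt⟩ := exists_map_aeval_eq_map_smul_pow W hK hz hι P hP0 hP
  -- a constant dominant term would have an integral value, not `1 / p`
  have hj₀1 : j₀ ≠ 0 := by
    rintro rfl
    obtain ⟨n, hn⟩ := hK _ hj₀
    rw [hval, pow_zero, Algebra.smul_def, mul_one, hn, WithTop.coe_inj] at hπ
    have hp1 : (1 : ℚ) < p := by exact_mod_cast hp.out.one_lt
    have h0 : (0 : ℚ) < n := hπ ▸ by positivity
    have h1 : (n : ℚ) < 1 := hπ ▸ (div_lt_one (by positivity)).2 hp1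
    have : 0 < n := by exact_mod_cast h0
    have : n < 1 := by exact_mod_cast h1
    omega
  have hshift : ∀ j < p, j ≠ 0 → W (P.coeff j • (z ^ j - y ^ j))
      = W (P.coeff j • z ^ j) + ((b - ι / p : ℚ) : WithTop ℚ) := by
    intro j hjp hj0
    have hjW : W (j : L) = 0 := W.map_natCast_of_ne_zero p
      ((CharP.cast_eq_zero_iff L p j).not.2 (Nat.not_dvd_of_pos_of_lt (Nat.pos_of_ne_zero hj0) hjp))
    have hdiff := W.map_add_pow_sub_pow hz hy hιb (Nat.one_le_iff_ne_zero.2 hj0) hjW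
    rw [add_sub_cancel, ← W.map_sub_swap] at hdiff
    rw [Algebra.smul_def, Algebra.smul_def, W.map_mul, W.map_mul, hdiff,
      W.map_pow_of_eq_coe hz, add_assoc, ← WithTop.coe_add]
    congr 2
    ring
  have hsum : aeval z P - aeval y P = ∑ j ∈ Finset.range p, P.coeff j • (z ^ j - y ^ j) := by
    simp only [aeval_eq_sum_range' hP, smul_sub, Finset.sum_sub_distrib]
  rw [hsum, W.map_sum_eq_of_lt (Finset.mem_range.2 hj₀p), hshift j₀ hj₀p hj₀1, ← hval, hπ,
    ← WithTop.coe_add]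
  intro j hj
  simp only [Finset.mem_sdiff, Finset.mem_range, Finset.mem_singleton] at hj
  rw [hshift j₀ hj₀p hj₀1]
  rcases eq_or_ne j 0 with rfl | hj0
  · simp only [pow_zero, sub_self, smul_zero, W.map_zero]
    rw [hval.symm, hπ, ← WithTop.coe_add]
    exact WithTop.coe_lt_top _
  · rw [hshift j hj.1 hj0]
    exact WithTop.add_lt_add_right WithTop.coe_ne_top (hlt j hj.1 hj.2)

theorem exists_natDegree_lt_aeval_eq_of_mem_adjoin {K : Type*} [Field K] [Algebra K L] {z π : L}
    (hz : IsIntegral K z) (hπ : π ∈ K⟮z⟯) :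
    ∃ P : K[X], P.natDegree < (minpoly K z).natDegree ∧ aeval z P = π := by
  obtain ⟨P, hP, hPπ⟩ := (adjoin.powerBasis hz).exists_eq_aeval ⟨π, hπ⟩
  refine ⟨P, by simpa using hP, ?_⟩
  rw [adjoin.powerBasis_gen] at hPπ
  simpa using (congrArg K⟮z⟯.val hPπ).symm

theorem exists_aeval_eq_of_mem_aroots_minpoly {K : Type*} [Field K] [Algebra K L]
    {π z : L} (hπ : IsIntegral K π) (hz : z ∈ K⟮π⟯) {P f : K[X]} (hP : aeval z P = π)
    (hf : aeval z f = 0) {r : L} (hr : r ∈ (minpoly K π).aroots L) :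
    ∃ y, aeval y f = 0 ∧ aeval y P = r := by
  set σ := (algHomAdjoinIntegralEquiv K hπ).symm ⟨r, hr⟩
  set z' : K⟮π⟯ := ⟨z, hz⟩
  have hval : ∀ Q : K[X], (aeval z' Q : L) = aeval z Q := fun Q =>
    (aeval_algHom_apply K⟮π⟯.val z' Q).symm
  refine ⟨σ z', ?_, ?_⟩
  · rw [aeval_algHom_apply, show aeval z' f = 0 from Subtype.ext ((hval f).trans hf), map_zero]
  · have hgen : aeval z' P = AdjoinSimple.gen K π := Subtype.ext ((hval P).trans hP)
    rw [aeval_algHom_apply, hgen, algHomAdjoinIntegralEquiv_symm_apply_gen]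

theorem adjoin_simple_eq_of_mem_of_le_natDegree {K : Type*} [Field K] [Algebra K L] {z π : L}
    (hz : IsIntegral K z) (hπ : π ∈ K⟮z⟯)
    (h : (minpoly K z).natDegree ≤ (minpoly K π).natDegree) : K⟮π⟯ = K⟮z⟯ := by
  have := adjoin.finiteDimensional hz
  refine eq_of_le_of_finrank_le (adjoin_simple_le_iff.2 hπ) ?_
  rwa [adjoin.finrank hz, adjoin.finrank (isIntegral_iff.1 (.of_finite K (⟨π, hπ⟩ : K⟮z⟯)))]

theorem separable_C_mul_X_pow_add_C_mul_X_sub_C {K : Type*} [Field K] {p : ℕ} [CharP K p]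
    (u : K) {A : K} (hA : A ≠ 0) (c : K) : (C u * X ^ p + C A * X - C c).Separable := by
  rw [separable_def, show derivative (C u * X ^ p + C A * X - C c) = C A by
    simp [derivative_X_pow, CharP.cast_eq_zero]]
  exact ⟨0, C A⁻¹, by rw [zero_mul, zero_add, ← C_mul, inv_mul_cancel₀ hA, C_1]⟩

section Extension

variable {K : Type*} [Field K] [Algebra K L] {p : ℕ} [hp : Fact p.Prime]

theorem finrank_adjoin_of_aeval_eq_zero
    (hK : ∀ a : K, a ≠ 0 → ∃ n : ℤ, W (algebraMap K L a) = (n : ℚ))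
    {u A c : K} (hu : u ≠ 0) {z : L} (hz : aeval z (C u * X ^ p + C A * X - C c) = 0) {ι : ℤ}
    (hzW : W z = ((ι / p : ℚ) : WithTop ℚ)) (hι : ¬ (p : ℤ) ∣ ι) :
    Module.finrank K K⟮z⟯ = p := by
  have hdeg : (C u * X ^ p + C A * X - C c).natDegree = p := by
    have := hp.out.two_le
    compute_degree
    · simp [hu, show p ≠ 1 by omega, show p ≠ 0 by omega]
    all_goals omega
  have hf0 : C u * X ^ p + C A * X - C c ≠ 0 :=
    ne_zero_of_natDegree_gt (hdeg ▸ hp.out.pos)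
  have hint : IsIntegral K z := (show IsAlgebraic K z from ⟨_, hf0, hz⟩).isIntegral
  refine (adjoin.finrank hint).trans (le_antisymm ?_ (le_natDegree_minpoly W hK hzW hι hint))
  exact hdeg ▸ natDegree_le_natDegree (minpoly.degree_le_of_ne_zero K z hf0 hz)

theorem exists_mem_adjoin_map_eq_one_div
    (hsurj : ∀ n : ℤ, ∃ a : K, W (algebraMap K L a) = (n : ℚ)) {z : L} {ι : ℤ}
    (hzW : W z = ((ι / p : ℚ) : WithTop ℚ)) (hι : ¬ (p : ℤ) ∣ ι) :
    ∃ π ∈ K⟮z⟯, W π = ((1 / p : ℚ) : WithTop ℚ) := by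
  have hι' : (ι : ZMod p) ≠ 0 := by rwa [Ne, ZMod.intCast_zmod_eq_zero_iff_dvd]
  set m := ((ι : ZMod p)⁻¹).val
  obtain ⟨k, hk⟩ : (p : ℤ) ∣ m * ι - 1 := by
    rw [← ZMod.intCast_zmod_eq_zero_iff_dvd]
    push_cast
    rw [ZMod.natCast_zmod_val, inv_mul_cancel₀ hι', sub_self]
  obtain ⟨s, hs⟩ := hsurj (-k)
  refine ⟨z ^ m * algebraMap K L s,
    mul_mem (pow_mem (mem_adjoin_simple_self K z) m) (IntermediateField.algebraMap_mem _ s), ?_⟩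
  rw [W.map_mul, W.map_pow_of_eq_coe hzW, hs, ← WithTop.coe_add, WithTop.coe_inj]
  have hkQ : (m : ℚ) * ι - 1 = p * k := by exact_mod_cast hk
  have hp0 : (p : ℚ) ≠ 0 := Nat.cast_ne_zero.2 hp.out.ne_zero
  field_simp
  push_cast
  linarith

end Extension

theorem map_aeval_derivative_minpoly_of_mem_adjoin {K : Type*} [Field K] [Algebra K L]
    [IsAlgClosed L] {p : ℕ} [hp : Fact p.Prime] [CharP K p]
    (hK : ∀ a : K, a ≠ 0 → ∃ n : ℤ, W (algebraMap K L a) = (n : ℚ))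
    {u A c : K} (hu : W (algebraMap K L u) = 0)
    (hA : W (algebraMap K L A) = ((p - 1 : ℚ) : WithTop ℚ)) {z : L}
    (hz : aeval z (C u * X ^ p + C A * X - C c) = 0) {ι : ℤ}
    (hzW : W z = ((ι / p : ℚ) : WithTop ℚ)) (hι : ¬ (p : ℤ) ∣ ι) (hιp : ι < p)
    {π : L} (hπ : π ∈ K⟮z⟯) (hπW : W π = ((1 / p : ℚ) : WithTop ℚ)) :
    W (aeval π (derivative (minpoly K π))) = (((p - 1) * (p - ι + 1) / p : ℚ) : WithTop ℚ) := by
  have := charP_of_injective_algebraMap (algebraMap K L).injective p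
  have hu0 : u ≠ 0 :=
    (map_ne_zero (algebraMap K L)).1 (W.ne_top_iff.1 (by rw [hu]; exact WithTop.coe_ne_top))
  have hA0 : A ≠ 0 :=
    (map_ne_zero (algebraMap K L)).1 (W.ne_top_iff.1 (by rw [hA]; exact WithTop.coe_ne_top))
  have hfin := finrank_adjoin_of_aeval_eq_zero W hK hu0 hz hzW hι
  have hzsep : IsSeparable K z :=
    (separable_C_mul_X_pow_add_C_mul_X_sub_C u hA0 c).of_dvd (minpoly.dvd K z hz)
  have := (isSeparable_adjoin_simple_iff_isSeparable K L).2 hzsep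
  have hπsep : IsSeparable K π := isSeparable_of_mem_isSeparable K L hπ
  obtain ⟨P, hP, hPπ⟩ := exists_natDegree_lt_aeval_eq_of_mem_adjoin hzsep.isIntegral hπ
  rw [← adjoin.finrank hzsep.isIntegral, hfin] at hP
  have hadj : K⟮π⟯ = K⟮z⟯ := adjoin_simple_eq_of_mem_of_le_natDegree hzsep.isIntegral hπ <| by
    rw [← adjoin.finrank hzsep.isIntegral, hfin]
    exact le_natDegree_minpoly W hK (ε := 1) (by simpa using hπW)
      (Int.natCast_dvd.not.2 (by simpa using hp.out.ne_one)) hπsep.isIntegral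
  have hπdeg : (minpoly K π).natDegree = p := by
    rw [← adjoin.finrank hπsep.isIntegral, hadj, hfin]
  have hzπ : z ∈ K⟮π⟯ := hadj ▸ mem_adjoin_simple_self K z
  rw [W.map_aeval_derivative_minpoly hπsep (g := (((p - ι + 1) / p : ℚ) : WithTop ℚ)), hπdeg,
    ← WithTop.coe_nsmul, nsmul_eq_mul, Nat.cast_sub hp.out.one_le, Nat.cast_one, mul_div_assoc]
  intro r hr hrπ
  obtain ⟨y, hy, rfl⟩ := exists_aeval_eq_of_mem_aroots_minpoly hπsep.isIntegral hzπ hPπ hz hr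
  rcases eq_or_map_sub_eq_one_of_roots W hu hA (by simpa using hy) (by simpa using hz)
    with rfl | hyz
  · exact absurd hPπ hrπ
  have hιb : (ι / p : ℚ) < 1 := by
    rw [div_lt_one (by exact_mod_cast hp.out.pos)]
    exact_mod_cast hιp
  rw [← hPπ, map_aeval_sub_aeval_of_map_sub_eq W hK hzW hι (by rw [hyz, WithTop.coe_one]) hιb hP
    (hPπ ▸ hπW)]
  have hp0 : (p : ℚ) ≠ 0 := Nat.cast_ne_zero.2 hp.out.ne_zero
  congr 1
  field_simp
  ring

end

theorem stmt_13_general (p : ℕ) (hp : p.Prime) (K : Type*) [Field K] [CharP K p]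
    (v : K → WithTop ℚ)
    -- `v` is a normalized discrete valuation: its values on `K^×` are exactly `ℤ`
    (hvint : ∀ a : K, a ≠ 0 → ∃ n : ℤ, v a = ((n : ℚ) : WithTop ℚ))
    (hvsurj : ∀ n : ℤ, ∃ a : K, v a = ((n : ℚ) : WithTop ℚ))
    -- an algebraic closure `L` of `K`
    (L : Type*) [Field L] [Algebra K L] [IsAlgClosure K L]
    -- `w` is an extension of `v` to `L`
    (w : L → WithTop ℚ)
    (hw0 : ∀ a, w a = ⊤ ↔ a = 0)
    (hwmul : ∀ a b, w (a * b) = w a + w b)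
    (hwadd : ∀ a b, min (w a) (w b) ≤ w (a + b))
    (hwv : ∀ a : K, w (algebraMap K L a) = v a)
    (u A c : K) (ι : ℤ) (hι1 : 1 ≤ ι) (hι2 : ι ≤ (p : ℤ) - 1)
    (hu : v u = ((0 : ℚ) : WithTop ℚ)) (hA : v A = (((p : ℚ) - 1 : ℚ) : WithTop ℚ))
    (hc : v c = ((ι : ℚ) : WithTop ℚ))
    (z : L) (hz : algebraMap K L u * z ^ p + algebraMap K L A * z - algebraMap K L c = 0) :
    Module.finrank K (IntermediateField.adjoin K {z}) = p ∧
    (∃ π : L, π ∈ IntermediateField.adjoin K {z} ∧ w π = (((1 : ℚ) / (p : ℚ)) : WithTop ℚ)) ∧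
    (∀ π : L, π ∈ IntermediateField.adjoin K {z} → w π = (((1 : ℚ) / (p : ℚ)) : WithTop ℚ) →
      w (Polynomial.aeval π (Polynomial.derivative (minpoly K π)))
        = (((((p : ℚ) - 1) * ((p : ℚ) - (ι : ℚ) + 1)) / (p : ℚ)) : WithTop ℚ)) := by
  have := Fact.mk hp
  have := IsAlgClosure.isAlgClosed K (K := L)
  let W : AddValuation L (WithTop ℚ) := .of w ((hw0 0).2 rfl)
    (map_one_eq_zero_of_map_mul_s13 (mt (hw0 1).1 one_ne_zero) hwmul) hwadd hwmul
  have hWv : ∀ a : K, W (algebraMap K L a) = v a := hwv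
  have hK (a : K) (ha : a ≠ 0) : ∃ n : ℤ, W (algebraMap K L a) = (n : ℚ) := by
    simpa only [hWv] using hvint a ha
  have hsurj (n : ℤ) : ∃ a : K, W (algebraMap K L a) = (n : ℚ) := by
    simpa only [hWv] using hvsurj n
  have hu' : W (algebraMap K L u) = 0 := (hWv u).trans (hu.trans WithTop.coe_zero)
  have hu0 : u ≠ 0 := (map_ne_zero (algebraMap K L)).1 (W.ne_top_iff.1 (by simp [hu']))
  have hι : ¬ (p : ℤ) ∣ ι := fun h => by have := Int.le_of_dvd (by omega) h; omega
  have hιp : ι < p := by omega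
  have hzW : W z = ((ι / p : ℚ) : WithTop ℚ) :=
    map_eq_div_of_root W hu' ((hWv A).trans hA) ((hWv c).trans hc) (by exact_mod_cast hιp) hz
  have hz' : aeval z (C u * X ^ p + C A * X - C c) = 0 := by simpa using hz
  exact ⟨finrank_adjoin_of_aeval_eq_zero W hK hu0 hz' hzW hι,
    exists_mem_adjoin_map_eq_one_div W hsurj hzW hι,
    fun π hπ hπW => map_aeval_derivative_minpoly_of_mem_adjoin W hK hu' ((hWv A).trans hA) hz'
      hzW hι hιp hπ hπW⟩

/-- Let `p` be a prime, and let `K` be a complete discretely valued field of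
characteristic `p` with normalized valuation `v` and perfect residue field.  Let
`u, A, c ∈ K` with `v(u) = 0`, `v(A) = p − 1`, and `v(c) = ι` where `1 ≤ ι ≤ p − 1`, and let
`z` be a root of `u·Z^p + A·Z − c` in an algebraic closure of `K`.  Then the degree-`p`
totally ramified extension `K(z)/K` has a unique ramification break, equal to `p − ι`;
equivalently, the different ideal of the extension of valuation rings `O_{K(z)}/O_K` has
valuation exponent `(p − 1)(p − ι + 1)`.

The conclusion is formalized through the "equivalently" clause: `[K(z) : K] = p`,
uniformizers `π` of `K(z)` exist (elements of `w`-value `1/p`; for such a `π` one has the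
monogenic presentation `O_{K(z)} = O_K[π]`), and for every uniformizer `π` of `K(z)` the
generator `g'(π)` of the different ideal (`g` the minimal polynomial of `π` over `K`) has
normalized valuation exponent `p·w(g'(π)) = (p − 1)(p − ι + 1)`.  The valuations are encoded
by their axioms, completeness by the convergence of Cauchy sequences, and perfectness of the
residue field by surjectivity of the Frobenius modulo the maximal ideal. -/
theorem stmt_13 (p : ℕ) (hp : p.Prime) (K : Type*) [Field K] [CharP K p]
    (v : K → WithTop ℚ)
    (hv0 : ∀ a, v a = ⊤ ↔ a = 0)
    (hvmul : ∀ a b, v (a * b) = v a + v b)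
    (hvadd : ∀ a b, min (v a) (v b) ≤ v (a + b))
    -- `v` is a normalized discrete valuation: its values on `K^×` are exactly `ℤ`
    (hvint : ∀ a : K, a ≠ 0 → ∃ n : ℤ, v a = ((n : ℚ) : WithTop ℚ))
    (hvsurj : ∀ n : ℤ, ∃ a : K, v a = ((n : ℚ) : WithTop ℚ))
    -- `K` is complete: every Cauchy sequence converges
    (hcomplete : ∀ f : ℕ → K,
      (∀ m : ℤ, ∃ N : ℕ, ∀ i ≥ N, ∀ j ≥ N, ((m : ℚ) : WithTop ℚ) ≤ v (f i - f j)) →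
      ∃ L : K, ∀ m : ℤ, ∃ N : ℕ, ∀ i ≥ N, ((m : ℚ) : WithTop ℚ) ≤ v (f i - L))
    -- the residue field of `v` is perfect (char `p`): Frobenius is surjective mod the
    -- maximal ideal
    (hperf : ∀ a : K, 0 ≤ v a → ∃ b : K, 0 ≤ v b ∧ 0 < v (b ^ p - a))
    -- an algebraic closure `L` of `K`
    (L : Type*) [Field L] [Algebra K L] [IsAlgClosure K L]
    -- `w` is an extension of `v` to `L`
    (w : L → WithTop ℚ)
    (hw0 : ∀ a, w a = ⊤ ↔ a = 0)
    (hwmul : ∀ a b, w (a * b) = w a + w b)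
    (hwadd : ∀ a b, min (w a) (w b) ≤ w (a + b))
    (hwv : ∀ a : K, w (algebraMap K L a) = v a)
    (u A c : K) (ι : ℤ) (hι1 : 1 ≤ ι) (hι2 : ι ≤ (p : ℤ) - 1)
    (hu : v u = ((0 : ℚ) : WithTop ℚ)) (hA : v A = (((p : ℚ) - 1 : ℚ) : WithTop ℚ))
    (hc : v c = ((ι : ℚ) : WithTop ℚ))
    (z : L) (hz : algebraMap K L u * z ^ p + algebraMap K L A * z - algebraMap K L c = 0) :
    Module.finrank K (IntermediateField.adjoin K {z}) = p ∧
    (∃ π : L, π ∈ IntermediateField.adjoin K {z} ∧ w π = (((1 : ℚ) / (p : ℚ)) : WithTop ℚ)) ∧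
    (∀ π : L, π ∈ IntermediateField.adjoin K {z} → w π = (((1 : ℚ) / (p : ℚ)) : WithTop ℚ) →
      w (Polynomial.aeval π (Polynomial.derivative (minpoly K π)))
        = (((((p : ℚ) - 1) * ((p : ℚ) - (ι : ℚ) + 1)) / (p : ℚ)) : WithTop ℚ)) :=
  stmt_13_general p hp K v hvint hvsurj L w hw0 hwmul hwadd hwv u A c ι hι1 hι2 hu hA hc z hz
end
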